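/- arXiv:1312.3025 — 2 statements merged into one kernel-verified Lean document; each statement's English description precedes it below -/
import Mathlib

section
/- For r = 1 (single partitions) and any generic χ ∈ ℚ, the order ≥_χ on partitions of n coincides with the usual dominance order: λ ≥_χ μ iff Σ_{j≤l} λ_j ≥ Σ_{j≤l} μ_j for all l. -/
open Finset

/-- Boxes of a multipartition, as triples (component, (row, col)). -/
def mbBoxes {r : ℕ} (Λ : Fin r → YoungDiagram) : Finset (Fin r × ℕ × ℕ) :=
  Finset.univ.biUnion fun i => (Λ i).cells.image fun c => (i, c)

/-- Shifted content of a box (i, (y, x)): χ i + x - y. -/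
def cont {r : ℕ} (χ : Fin r → ℚ) (b : Fin r × ℕ × ℕ) : ℚ :=
  χ b.1 + (b.2.2 : ℚ) - (b.2.1 : ℚ)

/-- Λ is an r-multipartition of n. -/
def isMP {r : ℕ} (n : ℕ) (Λ : Fin r → YoungDiagram) : Prop :=
  ∑ i, (Λ i).card = n

/-- The order ≥_χ : a bijection of boxes with contents of Λ-boxes dominating. -/
def contGE {r : ℕ} (χ : Fin r → ℚ) (Λ M : Fin r → YoungDiagram) : Prop :=
  ∃ e : ↥(mbBoxes Λ) ≃ ↥(mbBoxes M),
    ∀ b : ↥(mbBoxes Λ), cont χ (b : Fin r × ℕ × ℕ) ≥ cont χ ((e b : Fin r × ℕ × ℕ))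

/-- χ is generic for n: χ i - χ j avoids {0, ±1, …, ±(n-1)} for i ≠ j. -/
def generic (n : ℕ) {r : ℕ} (χ : Fin r → ℚ) : Prop :=
  ∀ i j : Fin r, i ≠ j → ∀ k : ℤ, k.natAbs < n → χ i - χ j ≠ (k : ℚ)

/-- Adjacency with explicit witnesses: Λ∖M lives in component l, M∖Λ in component m,
and they correspond under translation by (dy, dx). -/
def adjWitness {r : ℕ} (Λ M : Fin r → YoungDiagram) (l m : Fin r) (dy dx : ℤ) : Prop :=
  (∀ i, i ≠ l → ∀ c ∈ (Λ i).cells, c ∈ (M i).cells) ∧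
  (∀ i, i ≠ m → ∀ c ∈ (M i).cells, c ∈ (Λ i).cells) ∧
  (∀ y x : ℕ, ((y, x) ∈ (Λ l).cells ∧ (y, x) ∉ (M l).cells) ↔
    ∃ y' x' : ℕ, ((y', x') ∈ (M m).cells ∧ (y', x') ∉ (Λ m).cells) ∧
      (y' : ℤ) = (y : ℤ) + dy ∧ (x' : ℤ) = (x : ℤ) + dx)

def adjacent {r : ℕ} (Λ M : Fin r → YoungDiagram) : Prop :=
  ∃ l m dy dx, adjWitness Λ M l m dy dx

/-- One step of the adjacency order. -/
def adjStep {r : ℕ} (χ : Fin r → ℚ) (Λ M : Fin r → YoungDiagram) : Prop :=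
  adjacent Λ M ∧ contGE χ Λ M

/-- The adjacency order ⊵_χ : transitive closure of single steps. -/
def adjOrder {r : ℕ} (χ : Fin r → ℚ) : (Fin r → YoungDiagram) → (Fin r → YoungDiagram) → Prop :=
  Relation.ReflTransGen (adjStep χ)

/-- Multiset of shifted contents of the boxes of Λ. -/
def contMultiset {r : ℕ} (χ : Fin r → ℚ) (Λ : Fin r → YoungDiagram) : Multiset ℚ :=
  (mbBoxes Λ).val.map (cont χ)

/-- χ lies in the asymptotic chamber: χ_i − χ_{i+1} > n − 1. -/
def asymptotic (n : ℕ) {r : ℕ} (χ : Fin r → ℚ) : Prop :=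
  ∀ i : ℕ, ∀ h : i + 1 < r, χ ⟨i, Nat.lt_of_succ_lt h⟩ - χ ⟨i + 1, h⟩ > (n : ℚ) - 1

/-- Concatenated padded row-length sequence: Λ_{n·k+i} = λ^{k+1}_i (0-indexed here). -/
def rowSeq (n : ℕ) {r : ℕ} (Λ : Fin r → YoungDiagram) (t : ℕ) : ℕ :=
  if h : t / n < r then (Λ ⟨t / n, h⟩).rowLen (t % n) else 0

/-- Shifted contents sorted in decreasing order. -/
def descContents {r : ℕ} (χ : Fin r → ℚ) (Λ : Fin r → YoungDiagram) : List ℚ :=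
  (contMultiset χ Λ).sort (· ≥ ·)

namespace StmtAux

/-- Number of boxes of `ν` with content `x - y < c`. -/
def bcount (ν : YoungDiagram) (c : ℤ) : ℕ :=
  (ν.cells.filter (fun b : ℕ × ℕ => ((b.2 : ℤ) - (b.1 : ℤ)) < c)).card

lemma cells_eq_biUnion (ν : YoungDiagram) {R : ℕ} (hR : ν.colLen 0 ≤ R) :
    ν.cells = (Finset.range R).biUnion ν.row := by
  ext ⟨y, x⟩
  simp only [Finset.mem_biUnion, Finset.mem_range, YoungDiagram.mem_row_iff,
    YoungDiagram.mem_cells]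
  constructor
  · intro h
    refine ⟨y, ?_, h, rfl⟩
    have h0 : (y, 0) ∈ ν := ν.up_left_mem le_rfl (Nat.zero_le x) h
    have := YoungDiagram.mem_iff_lt_colLen.mp h0
    omega
  · rintro ⟨i, -, h, rfl⟩
    exact h

lemma card_filter_cells (ν : YoungDiagram) {R : ℕ} (hR : ν.colLen 0 ≤ R)
    (P : ℕ × ℕ → Prop) [DecidablePred P] :
    (ν.cells.filter P).card = ∑ y ∈ Finset.range R, ((ν.row y).filter P).card := by
  rw [cells_eq_biUnion ν hR, Finset.filter_biUnion, Finset.card_biUnion]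
  intro i _ j _ hij
  refine Finset.disjoint_filter_filter ?_
  rw [Finset.disjoint_left]
  intro a ha hb
  rw [YoungDiagram.mem_row_iff] at ha hb
  exact hij (ha.2 ▸ hb.2)

lemma row_filter_card (ν : YoungDiagram) (y : ℕ) (c : ℤ) :
    ((ν.row y).filter (fun b : ℕ × ℕ => ((b.2 : ℤ) - (b.1 : ℤ)) < c)).card
      = min (ν.rowLen y) (((y : ℤ) + c).toNat) := by
  have : (ν.row y).filter (fun b : ℕ × ℕ => ((b.2 : ℤ) - (b.1 : ℤ)) < c)
      = {y} ×ˢ Finset.range (min (ν.rowLen y) (((y : ℤ) + c).toNat)) := by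
    rw [YoungDiagram.row_eq_prod]
    ext ⟨y', x⟩
    simp only [Finset.mem_filter, Finset.mem_product, Finset.mem_singleton, Finset.mem_range,
      lt_min_iff]
    constructor
    · rintro ⟨⟨rfl, hx⟩, hc⟩
      refine ⟨rfl, hx, ?_⟩
      rw [Int.lt_toNat]
      omega
    · rintro ⟨rfl, hx, ht⟩
      rw [Int.lt_toNat] at ht
      exact ⟨⟨rfl, hx⟩, by omega⟩
  rw [this, Finset.card_product, Finset.card_singleton, Finset.card_range, one_mul]

lemma bcount_eq_sum (ν : YoungDiagram) {R : ℕ} (hR : ν.colLen 0 ≤ R) (c : ℤ) :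
    bcount ν c = ∑ y ∈ Finset.range R, min (ν.rowLen y) (((y : ℤ) + c).toNat) := by
  rw [bcount, card_filter_cells ν hR]
  exact Finset.sum_congr rfl fun y _ => row_filter_card ν y c

lemma card_eq_sum_rowLen (ν : YoungDiagram) {R : ℕ} (hR : ν.colLen 0 ≤ R) :
    ν.card = ∑ y ∈ Finset.range R, ν.rowLen y := by
  have h := card_filter_cells ν hR (fun _ => True)
  simpa [YoungDiagram.card, YoungDiagram.rowLen_eq_card] using h

lemma rowLen_colLen_zero (ν : YoungDiagram) : ν.rowLen (ν.colLen 0) = 0 := by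
  by_contra h
  have h1 : (ν.colLen 0, 0) ∈ ν := YoungDiagram.mem_iff_lt_rowLen.mpr (by omega)
  have := YoungDiagram.mem_iff_lt_colLen.mp h1
  omega

lemma sum_min_le (a m : ℕ → ℕ) {k R : ℕ} (hkR : k ≤ R) :
    ∑ y ∈ Finset.range R, min (a y) (m y)
      ≤ (∑ y ∈ Finset.range k, m y) + ∑ y ∈ Finset.Ico k R, a y := by
  rw [Finset.range_eq_Ico, ← Finset.sum_Ico_consecutive _ (Nat.zero_le k) hkR,
    ← Finset.range_eq_Ico]
  gcongr with y hy
  · exact min_le_right _ _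
  · exact min_le_left _ _

lemma sum_min_eq (a m : ℕ → ℕ) {k R : ℕ} (hkR : k ≤ R)
    (h1 : ∀ y < k, m y ≤ a y) (h2 : ∀ y, k ≤ y → a y ≤ m y) :
    ∑ y ∈ Finset.range R, min (a y) (m y)
      = (∑ y ∈ Finset.range k, m y) + ∑ y ∈ Finset.Ico k R, a y := by
  rw [Finset.range_eq_Ico, ← Finset.sum_Ico_consecutive _ (Nat.zero_le k) hkR,
    ← Finset.range_eq_Ico]
  congr 1
  · exact Finset.sum_congr rfl fun y hy => min_eq_right (h1 y (Finset.mem_range.mp hy))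
  · exact Finset.sum_congr rfl fun y hy => min_eq_left (h2 y (Finset.mem_Ico.mp hy).1)


lemma sum_range_Ico (f : ℕ → ℕ) {k R : ℕ} (h : k ≤ R) :
    ∑ y ∈ Finset.range k, f y + ∑ y ∈ Finset.Ico k R, f y = ∑ y ∈ Finset.range R, f y := by
  rw [Finset.range_eq_Ico, Finset.range_eq_Ico]
  exact Finset.sum_Ico_consecutive f (Nat.zero_le k) h

lemma sum_min_le' (A : YoungDiagram) (c : ℤ) {k R : ℕ} (hkR : k ≤ R) :
    ∑ y ∈ Finset.range R, min (A.rowLen y) (((y : ℤ) + c).toNat)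
      ≤ (∑ y ∈ Finset.range k, ((y : ℤ) + c).toNat) + ∑ y ∈ Finset.Ico k R, A.rowLen y :=
  sum_min_le A.rowLen (fun y => ((y : ℤ) + c).toNat) hkR

lemma sum_min_eq' (A : YoungDiagram) (c : ℤ) {k R : ℕ} (hkR : k ≤ R)
    (h1 : ∀ y < k, ((y : ℤ) + c).toNat ≤ A.rowLen y)
    (h2 : ∀ y, k ≤ y → A.rowLen y ≤ ((y : ℤ) + c).toNat) :
    ∑ y ∈ Finset.range R, min (A.rowLen y) (((y : ℤ) + c).toNat)
      = (∑ y ∈ Finset.range k, ((y : ℤ) + c).toNat) + ∑ y ∈ Finset.Ico k R, A.rowLen y :=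
  sum_min_eq A.rowLen (fun y => ((y : ℤ) + c).toNat) hkR h1 h2

/-- B1: dominance implies the counting inequalities. -/
lemma bcount_le_of_dom (A B : YoungDiagram) (hcard : A.card = B.card)
    (hdom : ∀ l, ∑ j ∈ Finset.range l, B.rowLen j ≤ ∑ j ∈ Finset.range l, A.rowLen j)
    (c : ℤ) : bcount A c ≤ bcount B c := by
  set R := max (A.colLen 0) (B.colLen 0) with hRdef
  have hRA : A.colLen 0 ≤ R := le_max_left _ _
  have hRB : B.colLen 0 ≤ R := le_max_right _ _
  have hmono : ∀ {y y' : ℕ}, y ≤ y' → ((y : ℤ) + c).toNat ≤ ((y' : ℤ) + c).toNat := by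
    intro y y' h
    apply Int.toNat_le_toNat
    omega
  have hex : ∃ y, B.rowLen y ≤ ((y : ℤ) + c).toNat :=
    ⟨B.colLen 0, by rw [rowLen_colLen_zero]; exact Nat.zero_le _⟩
  set k := Nat.find hex with hk
  have hkspec : B.rowLen k ≤ ((k : ℤ) + c).toNat := Nat.find_spec hex
  have hkmin : ∀ y < k, ((y : ℤ) + c).toNat < B.rowLen y := by
    intro y hy
    have := Nat.find_min hex hy
    omega
  have hkR : k ≤ R := le_trans (Nat.find_le (by rw [rowLen_colLen_zero]; exact Nat.zero_le _)) hRB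
  rw [bcount_eq_sum A hRA c, bcount_eq_sum B hRB c]
  have hBeq := sum_min_eq' B c hkR
    (fun y hy => le_of_lt (hkmin y hy))
    (fun y hy => le_trans (B.rowLen_anti k y hy) (le_trans hkspec (hmono hy)))
  have hAle := sum_min_le' A c hkR
  rw [hBeq]
  refine le_trans hAle ?_
  have hA := sum_range_Ico A.rowLen hkR
  have hB := sum_range_Ico B.rowLen hkR
  have hcA : A.card = ∑ y ∈ Finset.range R, A.rowLen y := card_eq_sum_rowLen A hRA
  have hcB : B.card = ∑ y ∈ Finset.range R, B.rowLen y := card_eq_sum_rowLen B hRB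
  have hd := hdom k
  omega

/-- B2: the counting inequalities imply dominance. -/
lemma dom_of_bcount (A B : YoungDiagram) (hcard : A.card = B.card)
    (h : ∀ c, bcount A c ≤ bcount B c) (l : ℕ) :
    ∑ j ∈ Finset.range l, B.rowLen j ≤ ∑ j ∈ Finset.range l, A.rowLen j := by
  rcases Nat.eq_zero_or_pos l with rfl | hl
  · simp
  obtain ⟨l', rfl⟩ : ∃ l', l = l' + 1 := ⟨l - 1, by omega⟩
  set a := A.rowLen l' with ha
  set c : ℤ := (a : ℤ) - l' with hc
  set R := max (l' + 1) (max (A.colLen 0) (B.colLen 0)) with hR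
  have hRA : A.colLen 0 ≤ R := le_trans (le_max_left _ _) (le_max_right _ _)
  have hRB : B.colLen 0 ≤ R := le_trans (le_max_right _ _) (le_max_right _ _)
  have hlR : l' + 1 ≤ R := le_max_left _ _
  have hAeq := sum_min_eq' A c hlR
    (fun y hy => by
      have h1 : ((y : ℤ) + c).toNat ≤ a := by
        rw [Int.toNat_le]
        omega
      exact le_trans h1 (A.rowLen_anti y l' (by omega)))
    (fun y hy => by
      have h1 : a + 1 ≤ ((y : ℤ) + c).toNat := by
        rw [Int.le_toNat (by omega)]
        push_cast
        omega
      exact le_trans (le_trans (A.rowLen_anti l' y (by omega)) (by omega)) h1)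
  have hBle := sum_min_le' B c hlR
  have hbc := h c
  rw [bcount_eq_sum A hRA c, bcount_eq_sum B hRB c, hAeq] at hbc
  have hA := sum_range_Ico A.rowLen hlR
  have hB := sum_range_Ico B.rowLen hlR
  have hcA : A.card = ∑ y ∈ Finset.range R, A.rowLen y := card_eq_sum_rowLen A hRA
  have hcB : B.card = ∑ y ∈ Finset.range R, B.rowLen y := card_eq_sum_rowLen B hRB
  omega

lemma mbBoxes_one (Λ : Fin 1 → YoungDiagram) :
    mbBoxes Λ = (Λ 0).cells.image (fun p => ((0 : Fin 1), p)) := by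
  unfold mbBoxes
  rw [show (Finset.univ : Finset (Fin 1)) = {0} from rfl, Finset.singleton_biUnion]

lemma pair_inj : Function.Injective (fun p : ℕ × ℕ => ((0 : Fin 1), p)) := by
  intro p q h
  simpa using h

lemma card_mbBoxes (Λ : Fin 1 → YoungDiagram) : (mbBoxes Λ).card = (Λ 0).card := by
  rw [mbBoxes_one, Finset.card_image_of_injective _ pair_inj]

lemma cont_lt_iff (χ : Fin 1 → ℚ) (p : ℕ × ℕ) (c : ℤ) :
    cont χ ((0 : Fin 1), p) < χ 0 + (c : ℚ) ↔ ((p.2 : ℤ) - (p.1 : ℤ)) < c := by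
  unfold cont
  simp only
  constructor
  · intro h
    have : (p.2 : ℚ) - (p.1 : ℚ) < (c : ℚ) := by linarith
    exact_mod_cast this
  · intro h
    have : (p.2 : ℚ) - (p.1 : ℚ) < (c : ℚ) := by exact_mod_cast h
    linarith

lemma card_filter_mbBoxes (χ : Fin 1 → ℚ) (Λ : Fin 1 → YoungDiagram) (c : ℤ) :
    ((mbBoxes Λ).filter (fun b => cont χ b < χ 0 + (c : ℚ))).card = bcount (Λ 0) c := by
  rw [mbBoxes_one, Finset.filter_image, Finset.card_image_of_injective _ pair_inj]
  unfold bcount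
  congr 1
  apply Finset.filter_congr
  intro p _
  simpa using cont_lt_iff χ p c

lemma forward_bcount (χ : Fin 1 → ℚ) (Λ M : Fin 1 → YoungDiagram)
    (h : contGE χ Λ M) (c : ℤ) : bcount (Λ 0) c ≤ bcount (M 0) c := by
  obtain ⟨e, he⟩ := h
  rw [← card_filter_mbBoxes χ Λ c, ← card_filter_mbBoxes χ M c]
  apply Finset.card_le_card_of_injOn
    (fun b => if hb : b ∈ mbBoxes Λ then ((e ⟨b, hb⟩ : ↥(mbBoxes M)) : Fin 1 × ℕ × ℕ) else b)
  · intro b hb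
    rw [Finset.mem_coe, Finset.mem_filter] at hb
    obtain ⟨hbm, hbc⟩ := hb
    simp only [Finset.mem_coe, dif_pos hbm, Finset.mem_filter]
    exact ⟨(e ⟨b, hbm⟩).2, lt_of_le_of_lt (he ⟨b, hbm⟩) hbc⟩
  · intro b1 h1 b2 h2 heq
    simp only [Finset.coe_filter, Set.mem_setOf_eq] at h1 h2
    simp only [dif_pos h1.1, dif_pos h2.1] at heq
    have := e.injective (Subtype.coe_injective heq)
    exact congrArg Subtype.val this


/-- Pointwise comparison of two descending-sorted lists from counting. -/
lemma sorted_pointwise {α : Type*} (f : α → ℚ) (s t : List α)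
    (hs : s.Pairwise (fun a b => f b ≤ f a)) (ht : t.Pairwise (fun a b => f b ≤ f a))
    (hcnt : ∀ q ∈ t.map f,
      t.countP (fun b => decide (q ≤ f b)) ≤ s.countP (fun b => decide (q ≤ f b)))
    (i : ℕ) (hi : i < s.length) (hi' : i < t.length) :
    f (t.get ⟨i, hi'⟩) ≤ f (s.get ⟨i, hi⟩) := by
  by_contra hlt
  push_neg at hlt
  set q := f (t.get ⟨i, hi'⟩) with hqdef
  have hq : q ∈ t.map f := List.mem_map_of_mem (f := f) (t.get_mem _)
  have h1 : i + 1 ≤ t.countP (fun b => decide (q ≤ f b)) := by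
    have hall : ∀ a ∈ t.take (i + 1), (fun b => decide (q ≤ f b)) a = true := by
      intro a ha
      obtain ⟨j, hj⟩ := List.mem_iff_get.mp ha
      have hjlen : (j : ℕ) < i + 1 :=
        lt_of_lt_of_le j.2 (le_trans (le_of_eq List.length_take) (min_le_left _ _))
      have hget : (t.take (i + 1)).get j = t.get ⟨j, by omega⟩ := by
        simp [List.get_eq_getElem, List.getElem_take]
      rw [← hj, hget, decide_eq_true_eq]
      rcases Nat.lt_or_ge (j : ℕ) i with hji | hji
      · exact ht.rel_get_of_lt (show (⟨(j : ℕ), by omega⟩ : Fin t.length) < ⟨i, hi'⟩ from hji)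
      · have hji' : (j : ℕ) = i := by omega
        have heq2 : t.get ⟨(j : ℕ), by omega⟩ = t.get ⟨i, hi'⟩ := by
          congr 1
          exact Fin.ext hji'
        rw [heq2]
    have hlen : (t.take (i + 1)).length = i + 1 := by
      rw [List.length_take]; omega
    have := List.countP_eq_length.mpr hall
    calc i + 1 = (t.take (i + 1)).countP (fun b => decide (q ≤ f b)) := by rw [this, hlen]
      _ ≤ t.countP (fun b => decide (q ≤ f b)) := by
          conv_rhs => rw [← List.take_append_drop (i + 1) t]
          rw [List.countP_append]
          omega
  have h2 : s.countP (fun b => decide (q ≤ f b)) ≤ i := by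
    have hz : (s.drop i).countP (fun b => decide (q ≤ f b)) = 0 := by
      rw [List.countP_eq_zero]
      intro a ha
      obtain ⟨j, hj⟩ := List.mem_iff_get.mp ha
      have hjlen : i + (j : ℕ) < s.length := by
        have h2 : (j : ℕ) < s.length - i := lt_of_lt_of_le j.2 (le_of_eq List.length_drop)
        omega
      have hget : (s.drop i).get j = s.get ⟨i + (j : ℕ), hjlen⟩ := by
        simp [List.get_eq_getElem, List.getElem_drop]
      have hfa : f a ≤ f (s.get ⟨i, hi⟩) := by
        rw [← hj, hget]
        rcases Nat.eq_zero_or_pos (j : ℕ) with hj0 | hj0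
        · simp [hj0]
        · exact hs.rel_get_of_lt (show (⟨i, hi⟩ : Fin s.length) < ⟨i + (j : ℕ), hjlen⟩ by
            simp only [Fin.mk_lt_mk]; omega)
      simp only [decide_eq_true_eq]
      intro hqa
      have : q ≤ f (s.get ⟨i, hi⟩) := le_trans hqa hfa
      exact absurd this (not_le.mpr hlt)
    conv_lhs => rw [← List.take_append_drop i s]
    rw [List.countP_append, hz]
    have := List.countP_le_length (l := s.take i) (p := fun b => decide (q ≤ f b))
    rw [List.length_take] at this
    omega
  have := hcnt q hq
  omega

lemma countP_toList {α : Type*} [DecidableEq α] (s : Finset α) (p : α → Prop) [DecidablePred p] :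
    s.toList.countP (fun b => decide (p b)) = (s.filter p).card := by
  rw [← Multiset.coe_countP, Finset.coe_toList]
  rw [Finset.card_filter]
  simp [Multiset.countP_eq_card_filter, Finset.filter]

lemma backward (χ : Fin 1 → ℚ) (Λ M : Fin 1 → YoungDiagram)
    (hcard : (Λ 0).card = (M 0).card)
    (hb : ∀ c : ℤ, bcount (Λ 0) c ≤ bcount (M 0) c) :
    contGE χ Λ M := by
  classical
  set key : (Fin 1 × ℕ × ℕ) → (Fin 1 × ℕ × ℕ) → Bool :=
    fun b b' => decide (cont χ b' ≤ cont χ b) with hkey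
  set LL := ((mbBoxes Λ).toList).mergeSort key with hLL
  set LM := ((mbBoxes M).toList).mergeSort key with hLM
  have permL : LL.Perm (mbBoxes Λ).toList := List.mergeSort_perm _ _
  have permM : LM.Perm (mbBoxes M).toList := List.mergeSort_perm _ _
  have memL : ∀ x, x ∈ LL ↔ x ∈ mbBoxes Λ := fun x => by
    rw [permL.mem_iff, Finset.mem_toList]
  have memM : ∀ x, x ∈ LM ↔ x ∈ mbBoxes M := fun x => by
    rw [permM.mem_iff, Finset.mem_toList]
  have nodupL : LL.Nodup := permL.nodup_iff.mpr (Finset.nodup_toList _)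
  have nodupM : LM.Nodup := permM.nodup_iff.mpr (Finset.nodup_toList _)
  have hlen : LL.length = LM.length := by
    rw [permL.length_eq, permM.length_eq, Finset.length_toList, Finset.length_toList,
      card_mbBoxes, card_mbBoxes, hcard]
  have htrans : ∀ a b c, key a b = true → key b c = true → key a c = true := by
    intro a b c h1 h2
    simp only [hkey, decide_eq_true_eq] at h1 h2 ⊢
    linarith
  have htotal : ∀ a b, (key a b || key b a) = true := by
    intro a b
    simp only [hkey, Bool.or_eq_true, decide_eq_true_eq]
    exact le_total _ _
  have sortedL : LL.Pairwise (fun b b' => cont χ b' ≤ cont χ b) := by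
    have := List.pairwise_mergeSort htrans htotal ((mbBoxes Λ).toList)
    refine this.imp ?_
    intro a b h
    simpa [hkey] using h
  have sortedM : LM.Pairwise (fun b b' => cont χ b' ≤ cont χ b) := by
    have := List.pairwise_mergeSort htrans htotal ((mbBoxes M).toList)
    refine this.imp ?_
    intro a b h
    simpa [hkey] using h
  -- counting hypothesis at thresholds that are contents of M-boxes
  have hcnt : ∀ q ∈ LM.map (cont χ),
      LM.countP (fun b => decide (q ≤ cont χ b)) ≤ LL.countP (fun b => decide (q ≤ cont χ b)) := by
    intro q hq
    obtain ⟨b, hbmem, rfl⟩ := List.mem_map.mp hq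
    set c0 : ℤ := (b.2.2 : ℤ) - (b.2.1 : ℤ) with hc0
    have hq' : cont χ b = χ 0 + (c0 : ℚ) := by
      have hb1 : b.1 = 0 := Subsingleton.elim _ _
      rw [cont, hb1, hc0]
      push_cast
      ring
    have key1 : ∀ (N : Fin 1 → YoungDiagram),
        ((mbBoxes N).filter (fun b' => cont χ b ≤ cont χ b')).card + bcount (N 0) c0
          = (mbBoxes N).card := by
      intro N
      have hsplit := Finset.card_filter_add_card_filter_not
        (s := mbBoxes N) (p := fun b' => cont χ b' < cont χ b)
      have hneg : (mbBoxes N).filter (fun b' => ¬ (cont χ b' < cont χ b))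
          = (mbBoxes N).filter (fun b' => cont χ b ≤ cont χ b') := by
        apply Finset.filter_congr
        intro x _
        simp [not_lt]
      have hlt : ((mbBoxes N).filter (fun b' => cont χ b' < cont χ b)).card = bcount (N 0) c0 := by
        have hfe : (mbBoxes N).filter (fun b' => cont χ b' < cont χ b)
            = (mbBoxes N).filter (fun b' => cont χ b' < χ 0 + (c0 : ℚ)) :=
          Finset.filter_congr (fun x _ => by rw [hq'])
        rw [hfe]
        exact card_filter_mbBoxes χ N c0
      rw [hneg, hlt] at hsplit
      omega
    have e1 : LM.countP (fun b' => decide (cont χ b ≤ cont χ b'))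
        = ((mbBoxes M).filter (fun b' => cont χ b ≤ cont χ b')).card := by
      rw [permM.countP_eq]
      exact countP_toList _ _
    have e2 : LL.countP (fun b' => decide (cont χ b ≤ cont χ b'))
        = ((mbBoxes Λ).filter (fun b' => cont χ b ≤ cont χ b')).card := by
      rw [permL.countP_eq]
      exact countP_toList _ _
    have k1 := key1 Λ
    have k2 := key1 M
    have hbc := hb c0
    have hcL := card_mbBoxes Λ
    have hcM := card_mbBoxes M
    omega
  -- build the equivalence
  let eL : Fin LL.length ≃ {x // x ∈ LL} := List.Nodup.getEquiv LL nodupL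
  let eM : Fin LM.length ≃ {x // x ∈ LM} := List.Nodup.getEquiv LM nodupM
  let sL : {x // x ∈ LL} ≃ {x // x ∈ mbBoxes Λ} := Equiv.subtypeEquivRight memL
  let sM : {x // x ∈ LM} ≃ {x // x ∈ mbBoxes M} := Equiv.subtypeEquivRight memM
  refine ⟨(sL.symm.trans eL.symm).trans ((finCongr hlen).trans (eM.trans sM)), ?_⟩
  intro b
  set i : Fin LL.length := eL.symm (sL.symm b) with hi
  have hbv : (b : Fin 1 × ℕ × ℕ) = LL.get i := by
    have h1 : eL i = sL.symm b := eL.apply_symm_apply _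
    have h2 := congrArg Subtype.val h1
    simp only [eL, List.Nodup.getEquiv, Equiv.coe_fn_mk] at h2
    simpa [sL, Equiv.subtypeEquivRight_symm_apply] using h2.symm
  have hev : (((sL.symm.trans eL.symm).trans ((finCongr hlen).trans (eM.trans sM))) b
      : Fin 1 × ℕ × ℕ) = LM.get ⟨(i : ℕ), by omega⟩ := by
    simp only [Equiv.trans_apply, ← hi]
    simp [sM, eM, List.Nodup.getEquiv, Equiv.subtypeEquivRight_apply, finCongr]
  rw [ge_iff_le, hbv, hev]
  exact sorted_pointwise (cont χ) LL LM sortedL sortedM hcnt (i : ℕ) i.2 (by omega)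


end StmtAux

/-- for r = 1 and generic χ, ≥_χ is the usual dominance order. -/
theorem contGE_iff_dominance_r1 (n : ℕ) (χ : Fin 1 → ℚ) (hgen : generic n χ)
    (Λ M : Fin 1 → YoungDiagram) (hΛ : isMP n Λ) (hM : isMP n M) :
    contGE χ Λ M ↔
      ∀ l : ℕ, ∑ j ∈ Finset.range l, (M 0).rowLen j ≤ ∑ j ∈ Finset.range l, (Λ 0).rowLen j := by
  have hcΛ : (Λ 0).card = n := by
    have h := hΛ
    unfold isMP at h
    rwa [Fin.sum_univ_one] at h
  have hcM : (M 0).card = n := by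
    have h := hM
    unfold isMP at h
    rwa [Fin.sum_univ_one] at h
  have hcc : (Λ 0).card = (M 0).card := by rw [hcΛ, hcM]
  constructor
  · intro h l
    exact StmtAux.dom_of_bcount (Λ 0) (M 0) hcc (StmtAux.forward_bcount χ Λ M h) l
  · intro hdom
    exact StmtAux.backward χ Λ M hcc
      (fun c => StmtAux.bcount_le_of_dom (Λ 0) (M 0) hcc hdom c)
end

section
/- If Λ and M are adjacent multipartitions with Λ ≥_χ M, and d denotes the common difference of shifted contents between a moved box of Λ and its corresponding box of M, then d > 0; and exchanging the roles of Λ and M yields difference −d < 0. -/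
open Finset

section Aux

variable {r : ℕ}

lemma mem_mbBoxes {Λ : Fin r → YoungDiagram} {b : Fin r × ℕ × ℕ} :
    b ∈ mbBoxes Λ ↔ b.2 ∈ (Λ b.1).cells := by
  unfold mbBoxes
  simp only [Finset.mem_biUnion, Finset.mem_univ, true_and, Finset.mem_image]
  constructor
  · rintro ⟨i, c, hc, rfl⟩; exact hc
  · intro h; exact ⟨b.1, b.2, h, rfl⟩

lemma mbBoxes_disj (Λ : Fin r → YoungDiagram) :
    Set.PairwiseDisjoint ↑(Finset.univ : Finset (Fin r))
      (fun i => (Λ i).cells.image fun c => ((i, c) : Fin r × ℕ × ℕ)) := by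
  intro i _ j _ hij
  simp only [Function.onFun, Finset.disjoint_left, Finset.mem_image]
  rintro b ⟨c, _, rfl⟩ ⟨c', _, h⟩
  exact hij (congrArg Prod.fst h).symm

lemma card_mbBoxes (Λ : Fin r → YoungDiagram) :
    (mbBoxes Λ).card = ∑ i, (Λ i).card := by
  unfold mbBoxes
  rw [Finset.card_biUnion (fun i _ j _ hij => mbBoxes_disj Λ (by simp) (by simp) hij)]
  refine Finset.sum_congr rfl fun i _ => ?_
  rw [Finset.card_image_of_injective _ (fun c1 c2 h => by simpa using h)]

lemma sum_mbBoxes (Λ : Fin r → YoungDiagram) (f : Fin r × ℕ × ℕ → ℚ) :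
    ∑ b ∈ mbBoxes Λ, f b = ∑ i, ∑ c ∈ (Λ i).cells, f (i, c) := by
  unfold mbBoxes
  rw [Finset.sum_biUnion (fun i _ j _ hij => mbBoxes_disj Λ (by simp) (by simp) hij)]
  refine Finset.sum_congr rfl fun i _ => ?_
  rw [Finset.sum_image (by intro c1 _ c2 _ h; simpa using h)]

lemma sum_cont_ge {χ : Fin r → ℚ} {Λ M : Fin r → YoungDiagram}
    (h : contGE χ Λ M) :
    ∑ b ∈ mbBoxes M, cont χ b ≤ ∑ b ∈ mbBoxes Λ, cont χ b := by
  obtain ⟨e, he⟩ := h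
  calc ∑ b ∈ mbBoxes M, cont χ b
      = ∑ b : ↥(mbBoxes M), cont χ (b : Fin r × ℕ × ℕ) := (Finset.sum_coe_sort _ _).symm
    _ = ∑ b : ↥(mbBoxes Λ), cont χ ((e b : Fin r × ℕ × ℕ)) :=
        (Equiv.sum_comp e (fun b => cont χ (b : Fin r × ℕ × ℕ))).symm
    _ ≤ ∑ b : ↥(mbBoxes Λ), cont χ (b : Fin r × ℕ × ℕ) :=
        Finset.sum_le_sum fun b _ => he b
    _ = ∑ b ∈ mbBoxes Λ, cont χ b := Finset.sum_coe_sort _ _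

lemma count_aux (n : ℕ) (Λ M : Fin r → YoungDiagram) (l m : Fin r) (hlm : l ≠ m)
    (hΛ : ∑ i, (Λ i).card = n) (dy dx : ℤ)
    (hrev : ∀ c' ∈ (M m).cells \ (Λ m).cells, ∃ c ∈ (Λ l).cells \ (M l).cells,
      ((c'.1 : ℤ) = (c.1 : ℤ) + dy ∧ (c'.2 : ℤ) = (c.2 : ℤ) + dx))
    (y x y' x' : ℕ) (hb : (y, x) ∈ (Λ l).cells) (hb' : (y', x') ∈ (M m).cells) :
    y + x' + 1 ≤ n := by
  classical
  set φ : ℕ → Fin r × ℕ × ℕ := fun j =>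
    if h : ((0 : ℕ), j) ∈ (M m).cells \ (Λ m).cells
    then (l, (hrev _ h).choose)
    else (m, ((0 : ℕ), j)) with hφ
  have key : ∀ j, ∀ h : ((0 : ℕ), j) ∈ (M m).cells \ (Λ m).cells,
      (hrev _ h).choose ∈ (Λ l).cells \ (M l).cells ∧
      ((0 : ℤ) = ((hrev _ h).choose.1 : ℤ) + dy ∧
        (j : ℤ) = ((hrev _ h).choose.2 : ℤ) + dx) := by
    intro j h
    exact ⟨(hrev _ h).choose_spec.1, (hrev _ h).choose_spec.2⟩
  set T1 : Finset (Fin r × ℕ × ℕ) :=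
    (Finset.range (y + 1)).image (fun i => (l, (i, (0 : ℕ)))) with hT1
  set T2 : Finset (Fin r × ℕ × ℕ) := (Finset.range (x' + 1)).image φ with hT2
  have hφinj : Function.Injective φ := by
    intro j1 j2 hj
    by_cases h1 : ((0 : ℕ), j1) ∈ (M m).cells \ (Λ m).cells <;>
      by_cases h2 : ((0 : ℕ), j2) ∈ (M m).cells \ (Λ m).cells
    · rw [hφ] at hj
      simp only [dif_pos h1, dif_pos h2, Prod.mk.injEq] at hj
      have e1 := (key j1 h1).2.2
      have e2 := (key j2 h2).2.2
      rw [hj.2] at e1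
      omega
    · rw [hφ] at hj
      simp only [dif_pos h1, dif_neg h2, Prod.mk.injEq] at hj
      exact absurd hj.1 hlm
    · rw [hφ] at hj
      simp only [dif_neg h1, dif_pos h2, Prod.mk.injEq] at hj
      exact absurd hj.1.symm hlm
    · rw [hφ] at hj
      simp only [dif_neg h1, dif_neg h2, Prod.mk.injEq] at hj
      exact hj.2.2
  have hT1sub : T1 ⊆ mbBoxes Λ := by
    intro b hb2
    rw [hT1, Finset.mem_image] at hb2
    obtain ⟨i, hi, rfl⟩ := hb2
    rw [Finset.mem_range] at hi
    rw [mem_mbBoxes]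
    exact (Λ l).up_left_mem (by omega) (Nat.zero_le _) hb
  have hT2sub : T2 ⊆ mbBoxes Λ := by
    intro b hb2
    rw [hT2, Finset.mem_image] at hb2
    obtain ⟨j, hj, rfl⟩ := hb2
    rw [Finset.mem_range] at hj
    have hjM : ((0 : ℕ), j) ∈ (M m).cells :=
      (M m).up_left_mem (Nat.zero_le _) (by omega) hb'
    rw [mem_mbBoxes]
    by_cases h : ((0 : ℕ), j) ∈ (M m).cells \ (Λ m).cells
    · rw [hφ]; simp only [dif_pos h]
      exact (Finset.mem_sdiff.1 (key j h).1).1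
    · rw [hφ]; simp only [dif_neg h]
      rw [Finset.mem_sdiff] at h
      push_neg at h
      exact h hjM
  have hinterkey : ∀ a ∈ T1 ∩ T2, ∃ j : ℕ, (j : ℤ) = dx ∧ a = φ j := by
    intro a ha
    obtain ⟨ha1, ha2⟩ := Finset.mem_inter.1 ha
    rw [hT1, Finset.mem_image] at ha1
    obtain ⟨i, _, rfl⟩ := ha1
    rw [hT2, Finset.mem_image] at ha2
    obtain ⟨j, _, hj⟩ := ha2
    refine ⟨j, ?_, hj.symm⟩
    by_cases h : ((0 : ℕ), j) ∈ (M m).cells \ (Λ m).cells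
    · rw [hφ] at hj
      simp only [dif_pos h, Prod.mk.injEq] at hj
      have e2 := (key j h).2.2
      rw [hj.2] at e2
      simpa using e2
    · rw [hφ] at hj
      simp only [dif_neg h, Prod.mk.injEq] at hj
      exact absurd hj.1 hlm.symm
  have hinter : (T1 ∩ T2).card ≤ 1 := by
    rw [Finset.card_le_one]
    intro a ha b hb2
    obtain ⟨j1, hj1, rfl⟩ := hinterkey a ha
    obtain ⟨j2, hj2, rfl⟩ := hinterkey b hb2
    have : j1 = j2 := by omega
    rw [this]
  have h1 : T1.card = y + 1 := by
    rw [hT1, Finset.card_image_of_injective _ (fun a b h => by simpa using h),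
      Finset.card_range]
  have h2 : T2.card = x' + 1 := by
    rw [hT2, Finset.card_image_of_injective _ hφinj, Finset.card_range]
  have h3 : (T1 ∪ T2).card ≤ n := by
    have := Finset.card_le_card (Finset.union_subset hT1sub hT2sub)
    rwa [card_mbBoxes, hΛ] at this
  have h4 := Finset.card_union_add_card_inter T1 T2
  omega

end Aux

/-- for adjacent Λ ≥_χ M, the common content difference d of moved
boxes is positive, and exchanging Λ and M gives −d < 0. -/
theorem adjacent_contGE_pos_diff (n r : ℕ) (χ : Fin r → ℚ) (hgen : generic n χ)
    (Λ M : Fin r → YoungDiagram) (hΛ : isMP n Λ) (hM : isMP n M)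
    (l m : Fin r) (dy dx : ℤ) (hadj : adjWitness Λ M l m dy dx)
    (hne : Λ ≠ M) (hge : contGE χ Λ M) :
    ∃ d : ℚ, 0 < d ∧
      ∀ y x y' x' : ℕ, (y, x) ∈ (Λ l).cells → (y, x) ∉ (M l).cells →
        (y' : ℤ) = (y : ℤ) + dy → (x' : ℤ) = (x : ℤ) + dx →
        cont χ (l, (y, x)) - cont χ (m, (y', x')) = d ∧
        cont χ (m, (y', x')) - cont χ (l, (y, x)) = -d := by
  classical
  obtain ⟨h1, h2, h3⟩ := hadj
  set d : ℚ := χ l - χ m + (dy : ℚ) - (dx : ℚ) with hd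
  have hclause : ∀ y x y' x' : ℕ, (y, x) ∈ (Λ l).cells → (y, x) ∉ (M l).cells →
      (y' : ℤ) = (y : ℤ) + dy → (x' : ℤ) = (x : ℤ) + dx →
      cont χ (l, (y, x)) - cont χ (m, (y', x')) = d ∧
      cont χ (m, (y', x')) - cont χ (l, (y, x)) = -d := by
    intro y x y' x' _ _ hy hx
    have hy' : (y' : ℚ) = (y : ℚ) + (dy : ℚ) := by exact_mod_cast congrArg (Int.cast : ℤ → ℚ) hy
    have hx' : (x' : ℚ) = (x : ℚ) + (dx : ℚ) := by exact_mod_cast congrArg (Int.cast : ℤ → ℚ) hx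
    constructor <;> (simp only [cont, hd]; rw [hy', hx']; ring)
  -- cell-set inclusions
  have hML : ∀ i, i ≠ l → (Λ i).cells ⊆ (M i).cells := fun i hi c hc => h1 i hi c hc
  have hMm : ∀ i, i ≠ m → (M i).cells ⊆ (Λ i).cells := fun i hi c hc => h2 i hi c hc
  set A : Finset (ℕ × ℕ) := (Λ l).cells \ (M l).cells with hA
  set B : Finset (ℕ × ℕ) := (M m).cells \ (Λ m).cells with hB
  -- card bookkeeping
  have hΛ' : ∑ i, (Λ i).card = n := hΛ
  have hM' : ∑ i, (M i).card = n := hM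
  have hsum0 : ∑ i, (((Λ i).card : ℤ) - ((M i).card : ℤ)) = 0 := by
    rw [Finset.sum_sub_distrib]
    have e1 : ∑ i, ((Λ i).card : ℤ) = (n : ℤ) := by exact_mod_cast hΛ'
    have e2 : ∑ i, ((M i).card : ℤ) = (n : ℤ) := by exact_mod_cast hM'
    rw [e1, e2, sub_self]
  have hf0 : ∀ i, i ≠ l → i ≠ m → (((Λ i).card : ℤ) - ((M i).card : ℤ)) = 0 := by
    intro i hil him
    have : (Λ i).cells = (M i).cells := subset_antisymm (hML i hil) (hMm i him)
    simp [YoungDiagram.card, this]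
  have hkey : A.card = B.card := by
    by_cases hlm : l = m
    · subst hlm
      have hll : ((Λ l).card : ℤ) - ((M l).card : ℤ) = 0 := by
        have : ∑ i ∈ ({l} : Finset (Fin r)), (((Λ i).card : ℤ) - ((M i).card : ℤ)) = 0 := by
          rw [← hsum0]
          apply Finset.sum_subset (Finset.subset_univ _)
          intro i _ hi
          rw [Finset.mem_singleton] at hi
          exact hf0 i hi hi
        simpa using this
      have hll2 : ((Λ l).cells.card : ℤ) - ((M l).cells.card : ℤ) = 0 := hll
      have e1 := Finset.card_inter_add_card_sdiff (Λ l).cells (M l).cells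
      have e2 := Finset.card_inter_add_card_sdiff (M l).cells (Λ l).cells
      rw [Finset.inter_comm] at e2
      rw [hA, hB]
      omega
    · have hpair : (((Λ l).card : ℤ) - ((M l).card : ℤ)) +
          (((Λ m).card : ℤ) - ((M m).card : ℤ)) = 0 := by
        have : ∑ i ∈ ({l, m} : Finset (Fin r)), (((Λ i).card : ℤ) - ((M i).card : ℤ)) = 0 := by
          rw [← hsum0]
          apply Finset.sum_subset (Finset.subset_univ _)
          intro i _ hi
          simp only [Finset.mem_insert, Finset.mem_singleton] at hi
          push_neg at hi
          exact hf0 i hi.1 hi.2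
        rwa [Finset.sum_pair hlm] at this
      have hsl : (M l).cells ⊆ (Λ l).cells := hMm l hlm
      have hsm : (Λ m).cells ⊆ (M m).cells := hML m (Ne.symm hlm)
      have e1 : A.card = (Λ l).cells.card - (M l).cells.card := Finset.card_sdiff_of_subset hsl
      have e2 : B.card = (M m).cells.card - (Λ m).cells.card := Finset.card_sdiff_of_subset hsm
      have hpair2 : (((Λ l).cells.card : ℤ) - ((M l).cells.card : ℤ)) +
          (((Λ m).cells.card : ℤ) - ((M m).cells.card : ℤ)) = 0 := hpair
      have l1 := Finset.card_le_card hsl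
      have l2 := Finset.card_le_card hsm
      omega
  -- the translation map
  set g : ℕ × ℕ → ℕ × ℕ :=
    fun c => (((c.1 : ℤ) + dy).toNat, ((c.2 : ℤ) + dx).toNat) with hg
  have hfwd : ∀ c ∈ A, g c ∈ B ∧ ((g c).1 : ℤ) = (c.1 : ℤ) + dy ∧
      ((g c).2 : ℤ) = (c.2 : ℤ) + dx := by
    intro c hc
    obtain ⟨hcΛ, hcM⟩ := Finset.mem_sdiff.1 hc
    obtain ⟨y', x', ⟨hmem, hnot⟩, hy, hx⟩ := (h3 c.1 c.2).1 ⟨hcΛ, hcM⟩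
    have hgc : g c = (y', x') := by
      rw [hg]
      dsimp only
      refine Prod.ext ?_ ?_ <;> dsimp only <;> omega
    rw [hgc]
    refine ⟨Finset.mem_sdiff.2 ⟨hmem, hnot⟩, by dsimp only; omega, by dsimp only; omega⟩
  have hginj : ∀ c1 ∈ A, ∀ c2 ∈ A, g c1 = g c2 → c1 = c2 := by
    intro c1 hc1 c2 hc2 h
    obtain ⟨_, e11, e12⟩ := hfwd c1 hc1
    obtain ⟨_, e21, e22⟩ := hfwd c2 hc2
    rw [h] at e11 e12
    refine Prod.ext ?_ ?_ <;> omega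
  have hsurj : ∀ c' ∈ B, ∃ c ∈ A, g c = c' := by
    intro c' hc'
    obtain ⟨c, hc, h⟩ := Finset.surj_on_of_inj_on_of_card_le (fun c (_ : c ∈ A) => g c)
      (fun c hc => (hfwd c hc).1) (fun c1 c2 hc1 hc2 h => hginj c1 hc1 c2 hc2 h)
      (le_of_eq hkey.symm) c' hc'
    exact ⟨c, hc, h.symm⟩
  -- nonemptiness of A
  have hAne : A.Nonempty := by
    rw [Finset.nonempty_iff_ne_empty]
    intro hAe
    apply hne
    have hBe : B = ∅ := Finset.card_eq_zero.1 (by rw [← hkey, hAe, Finset.card_empty])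
    funext i
    apply YoungDiagram.ext
    have hΛM : (Λ i).cells ⊆ (M i).cells := by
      by_cases hi : i = l
      · subst hi; exact Finset.sdiff_eq_empty_iff_subset.1 hAe
      · exact hML i hi
    have hMΛ : (M i).cells ⊆ (Λ i).cells := by
      by_cases hi : i = m
      · subst hi; exact Finset.sdiff_eq_empty_iff_subset.1 hBe
      · exact hMm i hi
    exact subset_antisymm hΛM hMΛ
  -- sum identity
  have hgen_id : ∀ (s t : Finset (ℕ × ℕ)) (f : ℕ × ℕ → ℚ),
      ∑ c ∈ s, f c - ∑ c ∈ t, f c = ∑ c ∈ s \ t, f c - ∑ c ∈ t \ s, f c := by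
    intro s t f
    rw [← Finset.sum_inter_add_sum_sdiff s t f, ← Finset.sum_inter_add_sum_sdiff t s f,
      Finset.inter_comm]
    ring
  have hSdiff : (∑ b ∈ mbBoxes Λ, cont χ b) - (∑ b ∈ mbBoxes M, cont χ b)
      = ∑ c ∈ A, cont χ (l, c) - ∑ c ∈ B, cont χ (m, c) := by
    rw [sum_mbBoxes Λ (cont χ), sum_mbBoxes M (cont χ), ← Finset.sum_sub_distrib]
    rw [Finset.sum_congr rfl (fun i _ => hgen_id (Λ i).cells (M i).cells (fun c => cont χ (i, c)))]
    rw [Finset.sum_sub_distrib]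
    congr 1
    · apply Finset.sum_eq_single l
      · intro i _ hi
        rw [Finset.sdiff_eq_empty_iff_subset.2 (hML i hi), Finset.sum_empty]
      · intro h; exact absurd (Finset.mem_univ l) h
    · apply Finset.sum_eq_single m
      · intro i _ hi
        rw [Finset.sdiff_eq_empty_iff_subset.2 (hMm i hi), Finset.sum_empty]
      · intro h; exact absurd (Finset.mem_univ m) h
  have hterm : ∀ c ∈ A, cont χ (m, g c) = cont χ (l, c) - d := by
    intro c hc
    obtain ⟨_, hy, hx⟩ := hfwd c hc
    have hyQ : (((g c).1 : ℚ)) = (c.1 : ℚ) + (dy : ℚ) := by exact_mod_cast congrArg (Int.cast : ℤ → ℚ) hy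
    have hxQ : (((g c).2 : ℚ)) = (c.2 : ℚ) + (dx : ℚ) := by exact_mod_cast congrArg (Int.cast : ℤ → ℚ) hx
    simp only [cont, hd]
    rw [hyQ, hxQ]
    ring
  have hbij : ∑ c ∈ A, cont χ (m, g c) = ∑ c ∈ B, cont χ (m, c) :=
    Finset.sum_bij (fun c _ => g c) (fun c hc => (hfwd c hc).1)
      (fun c1 hc1 c2 hc2 h => hginj c1 hc1 c2 hc2 h)
      (fun c' hc' => by obtain ⟨c, hc, h⟩ := hsurj c' hc'; exact ⟨c, hc, h⟩)
      (fun c hc => rfl)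
  have hkd : (∑ b ∈ mbBoxes Λ, cont χ b) - (∑ b ∈ mbBoxes M, cont χ b)
      = (A.card : ℚ) * d := by
    rw [hSdiff, ← hbij, Finset.sum_congr rfl hterm, Finset.sum_sub_distrib,
      Finset.sum_const, nsmul_eq_mul]
    ring
  have hge' := sum_cont_ge hge
  have hcard_pos : 0 < A.card := Finset.card_pos.2 hAne
  have hd0 : 0 ≤ d := by
    by_contra h
    push_neg at h
    have h1' : (A.card : ℚ) * d < 0 :=
      mul_neg_of_pos_of_neg (by exact_mod_cast hcard_pos) h
    rw [← hkd] at h1'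
    linarith
  -- d ≠ 0
  obtain ⟨c, hc⟩ := hAne
  obtain ⟨hgcB, hgy, hgx⟩ := hfwd c hc
  have hdne : d ≠ 0 := by
    intro hdz
    by_cases hlm : l = m
    · subst hlm
      have hdd : dy = dx := by
        have : (dy : ℚ) = (dx : ℚ) := by
          rw [hd] at hdz
          linarith [hdz]
        exact_mod_cast this
      obtain ⟨hcΛ, hcM⟩ := Finset.mem_sdiff.1 hc
      obtain ⟨hgM, hgΛ⟩ := Finset.mem_sdiff.1 hgcB
      rcases le_or_gt 0 dy with hpos | hneg
      · have l1 : c.1 ≤ (g c).1 := by omega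
        have l2 : c.2 ≤ (g c).2 := by rw [← hdd] at hgx; omega
        exact hcM ((M l).up_left_mem l1 l2 hgM)
      · have l1 : (g c).1 ≤ c.1 := by omega
        have l2 : (g c).2 ≤ c.2 := by rw [← hdd] at hgx; omega
        exact hgΛ ((Λ l).up_left_mem l1 l2 hcΛ)
    · have hχ : χ l - χ m = ((dx - dy : ℤ) : ℚ) := by
        rw [hd] at hdz
        push_cast
        linarith [hdz]
      have hrev2 : ∀ c0 ∈ (Λ l).cells \ (M l).cells, ∃ c1 ∈ (M m).cells \ (Λ m).cells,
          ((c0.1 : ℤ) = (c1.1 : ℤ) + (-dy) ∧ (c0.2 : ℤ) = (c1.2 : ℤ) + (-dx)) := by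
        intro c0 hc0
        obtain ⟨hB0, hy0, hx0⟩ := hfwd c0 hc0
        exact ⟨g c0, hB0, by omega, by omega⟩
      have hrev1 : ∀ c' ∈ (M m).cells \ (Λ m).cells, ∃ c0 ∈ (Λ l).cells \ (M l).cells,
          ((c'.1 : ℤ) = (c0.1 : ℤ) + dy ∧ (c'.2 : ℤ) = (c0.2 : ℤ) + dx) := by
        intro c' hc'
        obtain ⟨c0, hc0, hgc0⟩ := hsurj c' hc'
        obtain ⟨_, e1, e2⟩ := hfwd c0 hc0
        rw [hgc0] at e1 e2
        exact ⟨c0, hc0, e1, e2⟩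
      have hcΛ : (c.1, c.2) ∈ (Λ l).cells := (Finset.mem_sdiff.1 hc).1
      have hgM : ((g c).1, (g c).2) ∈ (M m).cells := (Finset.mem_sdiff.1 hgcB).1
      have b1 : c.1 + (g c).2 + 1 ≤ n :=
        count_aux n Λ M l m hlm hΛ' dy dx hrev1 c.1 c.2 (g c).1 (g c).2 hcΛ hgM
      have b2 : (g c).1 + c.2 + 1 ≤ n :=
        count_aux n M Λ m l (Ne.symm hlm) hM' (-dy) (-dx) hrev2 (g c).1 (g c).2 c.1 c.2 hgM hcΛ
      have hbound : (dx - dy).natAbs < n := by omega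
      exact hgen l m hlm (dx - dy) hbound hχ
  exact ⟨d, lt_of_le_of_ne hd0 (Ne.symm hdne), hclause⟩
end
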